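/- arXiv:2108.00197 — 2 statements merged into one kernel-verified Lean document; each statement's English description precedes it below -/
import Mathlib

section
/- Under the hypotheses of the previous item, for the two-particle jump chain $\hat X$ one has for all $i,j\in\mathbb{Z}^d$ and $n\ge 1$: $\hat{\mathbb{P}}^{[(i,1),(i,1)]}(\hat X_{2n} = [(j,1),(j,1)]) \ge m^{2n} a_n(i,j)^2$, and consequently the expected number of visits to $[(j,1),(j,1)]$ from $[(i,1),(i,1)]$ satisfies $\hat{\mathbb{E}}^{[(i,1),(i,1)]}[\hat R_j] \ge \sum_{n\ge 1} m^{2n} a_n(i,j)^2$. -/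
/-!
Two particles that both sit at `i` can reach `[(j,1),(j,1)]` in `2n` steps by first moving the
second particle from `i` to `j` in `n` single-particle migrations and then the first one. Each
migration `i → l` has probability at least `m · a₁(i, l)`, so by Chapman–Kolmogorov each leg has
probability at least `mⁿ aₙ(i, j)`, and the product of the two legs gives `m²ⁿ aₙ(i, j)²`.
Summing over the even times `2(n + 1)` bounds the expected number of visits.
-/

open scoped ENNReal
open Function

/-- `n`-fold composition of a transition kernel on a countable space. -/
noncomputable def aIter {α : Type*} [DecidableEq α] (a1 : α → α → ℝ≥0∞) : ℕ → α → α → ℝ≥0∞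
  | 0 => fun i j => if i = j then 1 else 0
  | n + 1 => fun i j => ∑' l, aIter a1 n i l * a1 l j

section MarkovKernel

variable {S : Type*} [DecidableEq S] {P : ℕ → S → S → ℝ≥0∞}

theorem chapman_kolmogorov (hP0 : ∀ a b, P 0 a b = if a = b then 1 else 0)
    (hCK : ∀ n a b, P (n + 1) a b = ∑' c, P 1 a c * P n c b) (n k : ℕ) (a b : S) :
    P (n + k) a b = ∑' c, P n a c * P k c b := by
  induction n generalizing a with
  | zero => simp only [Nat.zero_add, hP0, ite_mul, one_mul, zero_mul, tsum_ite_eq']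
  | succ n ih =>
    calc P (n + 1 + k) a b = ∑' c, P 1 a c * ∑' e, P n c e * P k e b := by
          rw [Nat.add_right_comm, hCK]
          simp only [ih]
      _ = ∑' c, ∑' e, P 1 a c * P n c e * P k e b := by
          simp only [← ENNReal.tsum_mul_left, mul_assoc]
      _ = ∑' e, (∑' c, P 1 a c * P n c e) * P k e b := by
          rw [ENNReal.tsum_comm]
          simp only [ENNReal.tsum_mul_right]
      _ = ∑' e, P (n + 1) a e * P k e b := tsum_congr fun e => by rw [hCK n a e]

theorem pow_mul_aIter_le {α : Type*} [DecidableEq α] (a1 : α → α → ℝ≥0∞) (m : ℝ≥0∞)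
    (hP0 : ∀ a b, P 0 a b = if a = b then 1 else 0)
    (hCK : ∀ n a b, P (n + 1) a b = ∑' c, P 1 a c * P n c b)
    {g : α → S} (hg : Injective g) (hstep : ∀ i l, m * a1 i l ≤ P 1 (g i) (g l))
    (n : ℕ) (i j : α) : m ^ n * aIter a1 n i j ≤ P n (g i) (g j) := by
  induction n generalizing j with
  | zero => simp [aIter, hP0, hg.eq_iff]
  | succ n ih =>
    calc m ^ (n + 1) * aIter a1 (n + 1) i j
        = ∑' l, m ^ n * aIter a1 n i l * (m * a1 l j) := by
          rw [aIter, ← ENNReal.tsum_mul_left]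
          exact tsum_congr fun l => by ring
      _ ≤ ∑' l, P n (g i) (g l) * P 1 (g l) (g j) :=
          ENNReal.tsum_le_tsum fun l => mul_le_mul' (ih l) (hstep l j)
      _ ≤ ∑' c, P n (g i) c * P 1 c (g j) :=
          ENNReal.tsum_comp_le_tsum_of_injective hg (fun c => P n (g i) c * P 1 c (g j))
      _ = P (n + 1) (g i) (g j) := (chapman_kolmogorov hP0 hCK n 1 _ _).symm

end MarkovKernel

theorem mul_le_of_forall_ne {α : Type*} {a1 Q : α → α → ℝ≥0∞} (ha1diag : ∀ i, a1 i i = 0)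
    {m : ℝ≥0∞} (h : ∀ i l, l ≠ i → m * a1 i l ≤ Q i l) (i l : α) : m * a1 i l ≤ Q i l := by
  obtain rfl | hne := eq_or_ne l i
  · simp [ha1diag]
  · exact h i l hne

theorem pow_two_mul_mul_aIter_sq_le {α β : Type*} [DecidableEq α] [DecidableEq β]
    {P : ℕ → β × β → β × β → ℝ≥0∞} (a1 : α → α → ℝ≥0∞) (m : ℝ≥0∞)
    (hP0 : ∀ a b, P 0 a b = if a = b then 1 else 0)
    (hCK : ∀ n a b, P (n + 1) a b = ∑' c, P 1 a c * P n c b)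
    {e : α → β} (he : Injective e)
    (hstep₂ : ∀ k i l, m * a1 i l ≤ P 1 (e k, e i) (e k, e l))
    (hstep₁ : ∀ k i l, m * a1 i l ≤ P 1 (e i, e k) (e l, e k)) (n : ℕ) (i j : α) :
    m ^ (2 * n) * aIter a1 n i j ^ 2 ≤ P (2 * n) (e i, e i) (e j, e j) := by
  have second := pow_mul_aIter_le a1 m hP0 hCK ((Prod.mk_right_injective (e i)).comp he)
    (hstep₂ i) n i j
  have first := pow_mul_aIter_le a1 m hP0 hCK ((Prod.mk_left_injective (e j)).comp he)
    (fun k l => hstep₁ j k l) n i j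
  calc m ^ (2 * n) * aIter a1 n i j ^ 2
      = m ^ n * aIter a1 n i j * (m ^ n * aIter a1 n i j) := by ring
    _ ≤ P n (e i, e i) (e i, e j) * P n (e i, e j) (e j, e j) := mul_le_mul' second first
    _ ≤ ∑' c, P n (e i, e i) c * P n c (e j, e j) := ENNReal.le_tsum (e i, e j)
    _ = P (2 * n) (e i, e i) (e j, e j) := by rw [two_mul, chapman_kolmogorov hP0 hCK]

theorem stmt_9_general {d : ℕ}
    (P : ℕ → (((Fin d → ℤ) × Bool) × ((Fin d → ℤ) × Bool)) →
      (((Fin d → ℤ) × Bool) × ((Fin d → ℤ) × Bool)) → ℝ≥0∞)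
    (a1 : (Fin d → ℤ) → (Fin d → ℤ) → ℝ≥0∞)
    (ha1diag : ∀ i, a1 i i = 0)
    (m : ℝ≥0∞)
    (hP0 : ∀ a b, P 0 a b = if a = b then 1 else 0)
    (hCK : ∀ n a b, P (n + 1) a b = ∑' c, P 1 a c * P n c b)
    (hstep₂ : ∀ (k i l : Fin d → ℤ), l ≠ i →
      m * a1 i l ≤ P 1 ((k, true), (i, true)) ((k, true), (l, true)))
    (hstep₁ : ∀ (k i l : Fin d → ℤ), l ≠ i →
      m * a1 i l ≤ P 1 ((i, true), (k, true)) ((l, true), (k, true))) :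
    (∀ n : ℕ, 1 ≤ n → ∀ i j : Fin d → ℤ,
      m ^ (2 * n) * (aIter a1 n i j) ^ 2 ≤
        P (2 * n) ((i, true), (i, true)) ((j, true), (j, true))) ∧
    (∀ i j : Fin d → ℤ,
      (∑' n : ℕ, m ^ (2 * (n + 1)) * (aIter a1 (n + 1) i j) ^ 2) ≤
        ∑' n : ℕ, P n ((i, true), (i, true)) ((j, true), (j, true))) := by
  have even_times := pow_two_mul_mul_aIter_sq_le a1 m hP0 hCK (Prod.mk_left_injective true)
    (fun k => mul_le_of_forall_ne ha1diag (hstep₂ k))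
    (fun k => mul_le_of_forall_ne ha1diag (hstep₁ k))
  refine ⟨fun n _ => even_times n, fun i j => ?_⟩
  have h_inj : Injective fun n : ℕ => 2 * (n + 1) := fun a b h => by simp_all
  calc ∑' n : ℕ, m ^ (2 * (n + 1)) * aIter a1 (n + 1) i j ^ 2
      ≤ ∑' n : ℕ, P (2 * (n + 1)) ((i, true), (i, true)) ((j, true), (j, true)) :=
        ENNReal.tsum_le_tsum fun n => even_times (n + 1) i j
    _ ≤ ∑' n : ℕ, P n ((i, true), (i, true)) ((j, true), (j, true)) :=
        ENNReal.tsum_comp_le_tsum_of_injective h_inj _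

/-- Under the hypotheses of the single-coordinate lower bound (both particles' migration
steps in the jump chain `X̂` dominate `m · a₁`), one has for all `i, j ∈ ℤ^d` and `n ≥ 1`:
`P̂^{[(i,1),(i,1)]}(X̂ (2n) = [(j,1),(j,1)]) ≥ m^{2n} a_n(i,j)²`, and consequently the
expected number of visits `Ê^{[(i,1),(i,1)]}[R̂_j] = ∑_{n≥0} P n [(i,1),(i,1)] [(j,1),(j,1)]`
is at least `∑_{n≥1} m^{2n} a_n(i,j)²`. -/
theorem stmt_9 {d : ℕ}
    (P : ℕ → (((Fin d → ℤ) × Bool) × ((Fin d → ℤ) × Bool)) →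
      (((Fin d → ℤ) × Bool) × ((Fin d → ℤ) × Bool)) → ℝ≥0∞)
    (a1 : (Fin d → ℤ) → (Fin d → ℤ) → ℝ≥0∞)
    (ha1prob : ∀ i, ∑' l, a1 i l = 1) (ha1diag : ∀ i, a1 i i = 0)
    (m : ℝ≥0∞) (hm0 : 0 < m) (hm1 : m < 1)
    (hP0 : ∀ a b, P 0 a b = if a = b then 1 else 0)
    (hCK : ∀ n a b, P (n + 1) a b = ∑' c, P 1 a c * P n c b)
    (hstep₂ : ∀ (k i l : Fin d → ℤ), l ≠ i →
      m * a1 i l ≤ P 1 ((k, true), (i, true)) ((k, true), (l, true)))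
    (hstep₁ : ∀ (k i l : Fin d → ℤ), l ≠ i →
      m * a1 i l ≤ P 1 ((i, true), (k, true)) ((l, true), (k, true))) :
    (∀ n : ℕ, 1 ≤ n → ∀ i j : Fin d → ℤ,
      m ^ (2 * n) * (aIter a1 n i j) ^ 2 ≤
        P (2 * n) ((i, true), (i, true)) ((j, true), (j, true))) ∧
    (∀ i j : Fin d → ℤ,
      (∑' n : ℕ, m ^ (2 * (n + 1)) * (aIter a1 (n + 1) i j) ^ 2) ≤
        ∑' n : ℕ, P n ((i, true), (i, true)) ((j, true), (j, true))) :=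
  stmt_9_general P a1 ha1diag m hP0 hCK hstep₂ hstep₁
end

section
/- Suppose the active population sizes $(N_i)_{i\in\mathbb{Z}^d}$ satisfy the non-clumping condition $\inf_{i\in\mathbb{Z}^d}\sum_{\|j-i\|\le R} 1/N_j > 0$ for some $R<\infty$. Suppose further that for all $i,j$, $\hat{\mathbb{E}}^{[(i,1),(i,1)]}[\hat R_j] \ge \sum_{n\ge 1} m^{2n} a_n(i,j)^2$ with $m\in(0,1)$, the kernel $a_n(0,\cdot)$ is translation-invariant ($a_n(i,j)=a_n(0,j-i)$), and $\sum_{n\ge 1} m^{2n} a_n(0,l)^2 > 0$ for every $l$ with $\|l\|\le R$. Then $\inf_{i\in\mathbb{Z}^d} \hat\nu([(i,1),(i,1)]) > 0$, where $\hat\nu([(i,1),(i,1)]) = \sum_{j} \frac{1}{2(c+\lambda)N_j + 1}\hat{\mathbb{E}}^{[(i,1),(i,1)]}[\hat R_j]$. -/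
open scoped ENNReal

/-!
On the `R`-ball around `i` every summand of `ν̂([(i,1),(i,1)])` is at least
`(2(c+λ)+1)⁻¹ ε N_j⁻¹`, where `ε > 0` is the minimum of `∑ₙ m^{2n} a_n(0,l)²` over the finitely
many `l` with `‖l‖ ≤ R` (using `N_j ≥ 1` and translation invariance). Summing over the ball
gives `ν̂([(i,1),(i,1)]) ≥ (2(c+λ)+1)⁻¹ ε ∑_{‖j-i‖≤R} N_j⁻¹`, and the non-clumping condition
bounds the last sum below uniformly in `i`.
-/

theorem lt_iInf_of_finite {α ι : Type*} [CompleteLinearOrder α] [Finite ι] {f : ι → α} {a : α}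
    (ha : a < ⊤) (h : ∀ i, a < f i) : a < ⨅ i, f i := by
  cases isEmpty_or_nonempty ι
  · simpa [iInf_of_empty] using ha
  · obtain ⟨i, hi⟩ := Finite.exists_min f
    exact (h i).trans_le (le_iInf hi)

theorem finite_setOf_norm_le {G : Type*} [SeminormedAddGroup G] [ProperSpace G]
    [DiscreteTopology G] (R : ℝ) : {l : G | ‖l‖ ≤ R}.Finite := by
  simpa only [Metric.closedBall, dist_zero_right] using
    (isCompact_closedBall (0 : G) R).finite_of_discrete

namespace ENNReal

theorem inv_add_one_mul_inv_le {x y : ℝ≥0∞} (hx : x ≠ ⊤) (hy : 1 ≤ y) :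
    (x + 1)⁻¹ * y⁻¹ ≤ (x * y + 1)⁻¹ := by
  rw [← ENNReal.mul_inv (Or.inl (by simp)) (Or.inl (add_ne_top.2 ⟨hx, one_ne_top⟩)),
    ENNReal.inv_le_inv]
  calc x * y + 1 ≤ x * y + y := by gcongr
    _ = (x + 1) * y := by ring

theorem mul_tsum_subtype_inv_le_tsum {α : Type*} (s : Set α) {x ε : ℝ≥0∞} (hx : x ≠ ⊤)
    {N E : α → ℝ≥0∞} (hN : ∀ j ∈ s, 1 ≤ N j) (hE : ∀ j ∈ s, ε ≤ E j) :
    (x + 1)⁻¹ * ε * ∑' j : s, (N j)⁻¹ ≤ ∑' j, (x * N j + 1)⁻¹ * E j := by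
  rw [← ENNReal.tsum_mul_left]
  calc ∑' j : s, (x + 1)⁻¹ * ε * (N j)⁻¹
      ≤ ∑' j : s, (x * N j + 1)⁻¹ * E j := by
        refine ENNReal.tsum_le_tsum fun j => ?_
        rw [mul_right_comm]
        exact mul_le_mul' (inv_add_one_mul_inv_le hx (hN j j.2)) (hE j j.2)
    _ ≤ ∑' j, (x * N j + 1)⁻¹ * E j :=
        ENNReal.tsum_comp_le_tsum_of_injective Subtype.val_injective _

end ENNReal

theorem stmt_10_general {d : ℕ}
    (N : (Fin d → ℤ) → ℕ) (hN : ∀ j, 2 ≤ N j)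
    (c lam : ℝ≥0∞) (hc : c < ⊤) (hlam : lam < ⊤)
    (m : ℝ≥0∞)
    (a : ℕ → (Fin d → ℤ) → ℝ≥0∞)
    (R : ℝ)
    (hnc : 0 < ⨅ i : Fin d → ℤ,
      ∑' j : {j : Fin d → ℤ // ‖j - i‖ ≤ R}, ((N j.1 : ℝ≥0∞))⁻¹)
    (E : (Fin d → ℤ) → (Fin d → ℤ) → ℝ≥0∞)
    (hE : ∀ i j : Fin d → ℤ,
      (∑' n : ℕ, m ^ (2 * (n + 1)) * (a (n + 1) (j - i)) ^ 2) ≤ E i j)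
    (hpos : ∀ l : Fin d → ℤ, ‖l‖ ≤ R →
      0 < ∑' n : ℕ, m ^ (2 * (n + 1)) * (a (n + 1) l) ^ 2) :
    0 < ⨅ i : Fin d → ℤ,
      ∑' j : Fin d → ℤ, (2 * (c + lam) * (N j : ℝ≥0∞) + 1)⁻¹ * E i j := by
  set ε := ⨅ l : {l : Fin d → ℤ // ‖l‖ ≤ R},
    ∑' n : ℕ, m ^ (2 * (n + 1)) * (a (n + 1) l) ^ 2
  have : Finite {l : Fin d → ℤ // ‖l‖ ≤ R} := (finite_setOf_norm_le R).to_subtype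
  have hε : 0 < ε := lt_iInf_of_finite ENNReal.zero_lt_top fun l => hpos l.1 l.2
  have hx : 2 * (c + lam) ≠ ⊤ :=
    ENNReal.mul_ne_top ENNReal.ofNat_ne_top (ENNReal.add_ne_top.2 ⟨hc.ne, hlam.ne⟩)
  have hκ : (2 * (c + lam) + 1)⁻¹ ≠ 0 :=
    ENNReal.inv_ne_zero.2 (ENNReal.add_ne_top.2 ⟨hx, ENNReal.one_ne_top⟩)
  refine (ENNReal.mul_pos (ENNReal.mul_pos hκ hε.ne').ne' hnc.ne').trans_le (le_iInf fun i => ?_)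
  have hball := ENNReal.mul_tsum_subtype_inv_le_tsum {j | ‖j - i‖ ≤ R} hx
    (ε := ε) (N := fun j => (N j : ℝ≥0∞)) (E := E i)
    (fun j _ => by exact_mod_cast (hN j).trans' one_le_two)
    (fun j hj => (iInf_le _ ⟨j - i, hj⟩).trans (hE i j))
  exact le_trans (by gcongr; exact iInf_le _ i) hball

/-- Non-clumping lower bound (Theorem 3.14(a)): if the active population sizes
`N : ℤ^d → ℕ` are non-clumping, the expected visit numbers satisfy
`Ê^{[(i,1),(i,1)]}[R̂_j] ≥ ∑_{n≥1} m^{2n} a_n(i,j)²` for a translation-invariant kernel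
`a_n(i,j) = a n (j - i)` with `∑_{n≥1} m^{2n} a_n(0,l)² > 0` for all `‖l‖ ≤ R`, then the
absorption probabilities, given by the series representation
`ν̂([(i,1),(i,1)]) = ∑_j (2(c+λ)N_j + 1)⁻¹ Ê^{[(i,1),(i,1)]}[R̂_j]`, are bounded away
from `0` uniformly in `i`. -/
theorem stmt_10 {d : ℕ}
    (N : (Fin d → ℤ) → ℕ) (hN : ∀ j, 2 ≤ N j)
    (c lam : ℝ≥0∞) (hc0 : 0 < c) (hc : c < ⊤) (hlam0 : 0 < lam) (hlam : lam < ⊤)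
    (m : ℝ≥0∞) (hm0 : 0 < m) (hm1 : m < 1)
    (a : ℕ → (Fin d → ℤ) → ℝ≥0∞)
    (R : ℝ) (hR : 0 ≤ R)
    (hnc : 0 < ⨅ i : Fin d → ℤ,
      ∑' j : {j : Fin d → ℤ // ‖j - i‖ ≤ R}, ((N j.1 : ℝ≥0∞))⁻¹)
    (E : (Fin d → ℤ) → (Fin d → ℤ) → ℝ≥0∞)
    (hE : ∀ i j : Fin d → ℤ,
      (∑' n : ℕ, m ^ (2 * (n + 1)) * (a (n + 1) (j - i)) ^ 2) ≤ E i j)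
    (hpos : ∀ l : Fin d → ℤ, ‖l‖ ≤ R →
      0 < ∑' n : ℕ, m ^ (2 * (n + 1)) * (a (n + 1) l) ^ 2) :
    0 < ⨅ i : Fin d → ℤ,
      ∑' j : Fin d → ℤ, (2 * (c + lam) * (N j : ℝ≥0∞) + 1)⁻¹ * E i j :=
  stmt_10_general N hN c lam hc hlam m a R hnc E hE hpos
end
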